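/- arXiv:2503.08233 — 2 statements merged into one kernel-verified Lean document; each statement's English description precedes it below -/
import Mathlib

section
/- Let Q be a finite quiver, let M be a straight representation of Q with straightening basis B, and let e be a dimension vector. Then the torus T_M = (ℂ*)^{d+c} acts on Gr_e(M) with finitely many fixed points, and every T_M-fixed point is a coordinate subrepresentation, i.e. each of its subspaces U^(i) is spanned by a subset of the basis vectors of B lying over the vertex i. In particular, there exists a constructible grading (a cocharacter of T_M) under which all elements of B have pairwise distinct weights: e.g. wt(a) = 1 for all a ∈ Q₁ and wt(b_{j,1}) = (j−1)·ℓ for the starting vertex b_{j,1} of the j-th string, where ℓ is the number of vertices of the longest string. -/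
open scoped Classical

noncomputable section

structure FinQuiver where
  V : Type
  A : Type
  [fV : Fintype V]
  [fA : Fintype A]
  [dV : DecidableEq V]
  [dA : DecidableEq A]
  src : A → V
  tgt : A → V

attribute [instance] FinQuiver.fV FinQuiver.fA FinQuiver.dV FinQuiver.dA

structure QuivRep (Q : FinQuiver) where
  M : Q.V → Type
  [acg : ∀ i, AddCommGroup (M i)]
  [mod : ∀ i, Module ℂ (M i)]
  [fd : ∀ i, FiniteDimensional ℂ (M i)]
  map : ∀ a : Q.A, M (Q.src a) →ₗ[ℂ] M (Q.tgt a)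

attribute [instance] QuivRep.acg QuivRep.mod QuivRep.fd

def QuivRep.grass {Q : FinQuiver} (R : QuivRep Q) (e : Q.V → ℕ) :
    Set (∀ i, Submodule ℂ (R.M i)) :=
  {U | (∀ a, (U (Q.src a)).map (R.map a) ≤ U (Q.tgt a)) ∧
    ∀ i, Module.finrank ℂ (U i) = e i}

def QuivRep.FlexAt {Q : FinQuiver} (R : QuivRep Q) (e : Q.V → ℕ) (i : Q.V) : Prop :=
  {W : Submodule ℂ (R.M i) | ∃ U ∈ R.grass e, U i = W}.Infinite

def QuivRep.Flex {Q : FinQuiver} (R : QuivRep Q) (e : Q.V → ℕ) : Prop :=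
  ∀ i, R.FlexAt e i

/-- A standard basis of a direct sum of windings of trees: a basis of each `M^(i)` such
that every `M_a` sends each basis vector either to zero or to a nonzero scalar multiple
of a basis vector, and (winding condition) no two basis vectors are sent by `M_a` to
multiples of the same basis vector. -/
structure ForestBasis {Q : FinQuiver} (R : QuivRep Q) where
  κ : Q.V → Type
  [fκ : ∀ i, Fintype (κ i)]
  [dκ : ∀ i, DecidableEq (κ i)]
  bas : ∀ i, Module.Basis (κ i) ℂ (R.M i)
  next : ∀ a : Q.A, κ (Q.src a) → Option (κ (Q.tgt a))
  coef : ∀ a : Q.A, κ (Q.src a) → ℂ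
  map_bas : ∀ a k, R.map a (bas (Q.src a) k) =
      Option.elim (next a k) 0 fun k' => coef a k • bas (Q.tgt a) k'
  coef_ne : ∀ a k, (next a k).isSome → coef a k ≠ 0
  next_inj : ∀ a k l, (next a k).isSome → next a k = next a l → k = l

attribute [instance] ForestBasis.fκ ForestBasis.dκ

namespace ForestBasis

variable {Q : FinQuiver} {R : QuivRep Q} (F : ForestBasis R)

/-- The set of all basis vectors (the vertex set of the coefficient quiver). -/
abbrev B := Σ i : Q.V, F.κ i

instance : Fintype F.B := by unfold ForestBasis.B; infer_instance

/-- Adjacency in the coefficient quiver `Q(M,B)`. -/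
def adj (p q : F.B) : Prop :=
  ∃ (a : Q.A) (k : F.κ (Q.src a)) (k' : F.κ (Q.tgt a)),
    F.next a k = some k' ∧ p = ⟨Q.src a, k⟩ ∧ q = ⟨Q.tgt a, k'⟩

/-- The number of connected components of the coefficient quiver; for a forest this is
the number of indecomposable direct summands of `M`. -/
def numComp : ℕ := Nat.card (Quot F.adj)

/-- The coefficient quiver is a forest: the number of vertices equals the number of
edges plus the number of connected components (i.e. every component is a tree). -/
def IsForest : Prop :=
  Fintype.card F.B =
    Nat.card {e : Σ a : Q.A, F.κ (Q.src a) // (F.next e.1 e.2).isSome} + F.numComp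

/-- The linear automorphism of `M^(i)` induced by a grading `wt` and `z ∈ ℂ*`:
each basis vector `b` is scaled by `z ^ wt b`. -/
def gradeMap (wt : F.B → ℤ) (z : ℂˣ) (i : Q.V) : R.M i →ₗ[ℂ] R.M i :=
  (F.bas i).constr ℂ fun k => ((z ^ wt ⟨i, k⟩ : ℂˣ) : ℂ) • F.bas i k

/-- The induced action of `z ∈ ℂ*` on tuples of subspaces. -/
def gact (wt : F.B → ℤ) (z : ℂˣ) (U : ∀ i, Submodule ℂ (R.M i)) :
    ∀ i, Submodule ℂ (R.M i) :=
  fun i => (U i).map (F.gradeMap wt z i)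

/-- A grading is `e`-admissible if its `ℂ*`-action preserves the quiver Grassmannian. -/
def Admissible (e : Q.V → ℕ) (wt : F.B → ℤ) : Prop :=
  ∀ (z : ℂˣ), ∀ U ∈ R.grass e, F.gact wt z U ∈ R.grass e

/-- A grading is constructible if every arrow has a fixed weight. -/
def Constructible (wt : F.B → ℤ) : Prop :=
  ∃ wtA : Q.A → ℤ, ∀ (a : Q.A) (k : F.κ (Q.src a)) (k' : F.κ (Q.tgt a)),
    F.next a k = some k' → wt ⟨Q.tgt a, k'⟩ = wt ⟨Q.src a, k⟩ + wtA a

/-- The action of a higher-rank torus obtained by combining several gradings. -/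
def mgradeMap {r : ℕ} (w : Fin r → (F.B → ℤ)) (t : Fin r → ℂˣ) (i : Q.V) :
    R.M i →ₗ[ℂ] R.M i :=
  (F.bas i).constr ℂ fun k => ((∏ j, t j ^ w j ⟨i, k⟩ : ℂˣ) : ℂ) • F.bas i k

def mgact {r : ℕ} (w : Fin r → (F.B → ℤ)) (t : Fin r → ℂˣ)
    (U : ∀ i, Submodule ℂ (R.M i)) : ∀ i, Submodule ℂ (R.M i) :=
  fun i => (U i).map (F.mgradeMap w t i)

/-- The torus `(ℂ*)^r` acts faithfully on `Gr_e(M)` via the gradings `w`. -/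
def Faithful {r : ℕ} (e : Q.V → ℕ) (w : Fin r → (F.B → ℤ)) : Prop :=
  ∀ t : Fin r → ℂˣ, (∀ U ∈ R.grass e, F.mgact w t U = U) → t = 1

end ForestBasis

end

noncomputable section

/-- The supporting arrows of `M`: arrows of `Q` on which `M` is nonzero. -/
abbrev QuivRep.SuppA {Q : FinQuiver} (R : QuivRep Q) := {a : Q.A // R.map a ≠ 0}

/-- Extension by `1` on non-supporting arrows of a tuple indexed by supporting arrows. -/
def QuivRep.nuExt {Q : FinQuiver} (R : QuivRep Q) (ν : R.SuppA → ℂˣ) (a : Q.A) : ℂˣ :=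
  if h : R.map a ≠ 0 then ν ⟨a, h⟩ else 1

/-- A straightening basis for a representation `M`: a basis of `⊕ᵢ M^(i)` whose
coefficient quiver is a disjoint union of `d` equioriented strings ("segments").
The `j`-th segment has `len j` basis vectors `b_{j,0}, …, b_{j,len j - 1}`, the vector
`b_{j,k}` lies over the vertex `vtx j k` of `Q`, and for `k+1 < len j` the arrow
`arrOf j k` of `Q` carries `b_{j,k}` to `b_{j,k+1}`; all other structure maps vanish
on basis vectors. -/
structure StraightBasis {Q : FinQuiver} (R : QuivRep Q) where
  d : ℕ
  len : Fin d → ℕ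
  len_pos : ∀ j, 0 < len j
  vtx : (j : Fin d) → Fin (len j) → Q.V
  arrOf : (j : Fin d) → Fin (len j) → Q.A
  arr_src : ∀ (j : Fin d) (k : Fin (len j)), (k : ℕ) + 1 < len j →
    Q.src (arrOf j k) = vtx j k
  arr_tgt : ∀ (j : Fin d) (k : Fin (len j)) (h : (k : ℕ) + 1 < len j),
    Q.tgt (arrOf j k) = vtx j ⟨(k : ℕ) + 1, h⟩
  bas : ∀ i, Module.Basis {p : Σ j : Fin d, Fin (len j) // vtx p.1 p.2 = i} ℂ (R.M i)
  map_bas : ∀ (a : Q.A) (p : {p : Σ j : Fin d, Fin (len j) // vtx p.1 p.2 = Q.src a}),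
      R.map a (bas (Q.src a) p) =
        if h : (p.1.2 : ℕ) + 1 < len p.1.1 ∧ arrOf p.1.1 p.1.2 = a then
          bas (Q.tgt a) ⟨⟨p.1.1, ⟨(p.1.2 : ℕ) + 1, h.1⟩⟩,
            (arr_tgt p.1.1 p.1.2 h.1).symm.trans (congrArg Q.tgt h.2)⟩
        else 0

/-- `M` is straight if it admits a straightening basis. -/
def QuivRep.IsStraight {Q : FinQuiver} (R : QuivRep Q) : Prop :=
  Nonempty (StraightBasis R)

namespace StraightBasis

variable {Q : FinQuiver} {R : QuivRep Q} (S : StraightBasis R)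

/-- The set of basis vectors: the vertex set of the coefficient quiver. -/
abbrev B (S : StraightBasis R) := Σ j : Fin S.d, Fin (S.len j)

instance : Fintype S.B := by unfold StraightBasis.B; infer_instance

/-- The vertex of `Q` over which a basis vector lies. -/
def overVtx (p : S.B) : Q.V := S.vtx p.1 p.2

/-- The fibre of the basis over a vertex of `Q`. -/
abbrev fiber (i : Q.V) := {p : S.B // S.overVtx p = i}

/-- The basis vector corresponding to `p`. -/
def bv (p : S.B) : R.M (S.overVtx p) := S.bas (S.overVtx p) ⟨p, rfl⟩

/-- The successor of a basis vector in the coefficient quiver (if any). -/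
def succOf (p : S.B) : Option S.B :=
  if h : (p.2 : ℕ) + 1 < S.len p.1 then some ⟨p.1, ⟨(p.2 : ℕ) + 1, h⟩⟩ else none

/-- The predecessor of a basis vector in the coefficient quiver (if any). -/
def predOf (p : S.B) : Option S.B :=
  if _ : 0 < (p.2 : ℕ) then
    some ⟨p.1, ⟨(p.2 : ℕ) - 1, lt_of_le_of_lt (Nat.sub_le _ _) p.2.isLt⟩⟩
  else none

/-- The torus `T_M = (ℂ*)^{d+c}`: one coordinate `γ_j` for each segment and one
coordinate `ν_a` for each arrow `a` of `Q` in the support of `M`. -/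
abbrev Torus (S : StraightBasis R) := (Fin S.d → ℂˣ) × (R.SuppA → ℂˣ)



/-- The character by which a torus element scales the basis vector `p`: the initial
coordinate `γ_j` of its segment times the product of the `ν`'s along the arrows of the
segment preceding `p`. -/
def twt (t : S.Torus) (p : S.B) : ℂˣ :=
  t.1 p.1 * ∏ m ∈ (Finset.range (p.2 : ℕ)).attach,
    R.nuExt t.2 (S.arrOf p.1 ⟨m.1, lt_trans (Finset.mem_range.mp m.2) p.2.isLt⟩)

/-- The linear action of a torus element on `M^(i)`. -/
def tmap (t : S.Torus) (i : Q.V) : R.M i →ₗ[ℂ] R.M i :=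
  (S.bas i).constr ℂ fun p => ((S.twt t p.1 : ℂˣ) : ℂ) • S.bas i p

/-- The action of the torus `T_M` on tuples of subspaces. -/
def tact (t : S.Torus) (U : ∀ i, Submodule ℂ (R.M i)) : ∀ i, Submodule ℂ (R.M i) :=
  fun i => (U i).map (S.tmap t i)

/-- The `T_M`-fixed points of the quiver Grassmannian. -/
def fixedPts (e : Q.V → ℕ) : Set (∀ i, Submodule ℂ (R.M i)) :=
  {U | U ∈ R.grass e ∧ ∀ t : S.Torus, S.tact t U = U}

/-- The `T_M`-orbit of a point. -/
def orbit (U : ∀ i, Submodule ℂ (R.M i)) : Set (∀ i, Submodule ℂ (R.M i)) :=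
  {W | ∃ t : S.Torus, W = S.tact t U}

/-- The (algebraic) cocharacter of `T_M` given by a pair of integer vectors. -/
def cochar (mγ : Fin S.d → ℤ) (mν : R.SuppA → ℤ) (z : ℂˣ) : S.Torus :=
  (fun j => z ^ mγ j, fun a => z ^ mν a)

/-- A subset `O` of the quiver Grassmannian is a one-dimensional `T_M`-orbit if it is
the orbit of a point of `Gr_e(M)`, is infinite, and coincides with the orbit of any of
its points under a single cocharacter of `T_M`. -/
def IsOneDimOrbitIn (e : Q.V → ℕ) (O : Set (∀ i, Submodule ℂ (R.M i))) : Prop :=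
  (∃ U ∈ R.grass e, O = S.orbit U) ∧ O.Infinite ∧
  ∀ x ∈ O, ∃ (mγ : Fin S.d → ℤ) (mν : R.SuppA → ℤ),
    O = {W | ∃ z : ℂˣ, W = S.tact (S.cochar mγ mν z) x}

/-- The coordinate subrepresentation spanned by the basis vectors in `K`. -/
def coordSub (K : Set S.B) : ∀ i, Submodule ℂ (R.M i) :=
  fun i => Submodule.span ℂ (⇑(S.bas i) '' {q : S.fiber i | q.1 ∈ K})

/-- The set of basis vectors lying in a given coordinate subrepresentation. -/
def coordSet (V : ∀ i, Submodule ℂ (R.M i)) : Set S.B :=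
  {p | S.bv p ∈ V (S.overVtx p)}

/-- A subset of the basis is successor closed if it is closed under taking successors
in the coefficient quiver. -/
def SuccClosed (K : Set S.B) : Prop :=
  ∀ p ∈ K, ∀ q, S.succOf p = some q → q ∈ K

/-- A subset of the basis is `e`-dimensional if it has `e i` elements over each
vertex `i` of `Q`. -/
def EDim (e : Q.V → ℕ) (K : Set S.B) : Prop :=
  ∀ i, Nat.card {p : S.B // p ∈ K ∧ S.overVtx p = i} = e i

/-- The `ℂ*`-action on `M^(i)` induced by a grading of the basis. -/
def zmap (wt : S.B → ℤ) (z : ℂˣ) (i : Q.V) : R.M i →ₗ[ℂ] R.M i :=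
  (S.bas i).constr ℂ fun p => ((z ^ wt p.1 : ℂˣ) : ℂ) • S.bas i p

/-- The `ℂ*`-action on tuples of subspaces induced by a grading. -/
def zact (wt : S.B → ℤ) (z : ℂˣ) (U : ∀ i, Submodule ℂ (R.M i)) :
    ∀ i, Submodule ℂ (R.M i) :=
  fun i => (U i).map (S.zmap wt z i)

/-- The position of a basis vector in a chosen ordering of its fibre. -/
def ordIdx (ord : ∀ i, S.fiber i ≃ Fin (Fintype.card (S.fiber i))) (p : S.B) : ℕ :=
  (ord (S.overVtx p) ⟨p, rfl⟩ : ℕ)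

/-- (SA1): over each arrow, endpoints of segments come later in the order than basis
vectors with outgoing arrows. -/
def SA1 (ord : ∀ i, S.fiber i ≃ Fin (Fintype.card (S.fiber i))) : Prop :=
  ∀ (a : Q.A) (p q : S.fiber (Q.src a)),
    R.map a (S.bas (Q.src a) p) = 0 → R.map a (S.bas (Q.src a) q) ≠ 0 →
      S.ordIdx ord q.1 < S.ordIdx ord p.1

/-- (SA2): over each arrow, the structure maps are order preserving. -/
def SA2 (ord : ∀ i, S.fiber i ≃ Fin (Fintype.card (S.fiber i))) : Prop :=
  ∀ (a : Q.A) (p q : S.fiber (Q.src a)) (p' q' : S.fiber (Q.tgt a)),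
    R.map a (S.bas (Q.src a) p) = S.bas (Q.tgt a) p' →
    R.map a (S.bas (Q.src a) q) = S.bas (Q.tgt a) q' →
      S.ordIdx ord q.1 < S.ordIdx ord p.1 → S.ordIdx ord q'.1 < S.ordIdx ord p'.1

/-- (AG1): within each fibre, the grading strictly increases with the order. -/
def AG1 (ord : ∀ i, S.fiber i ≃ Fin (Fintype.card (S.fiber i))) (wt : S.B → ℤ) : Prop :=
  ∀ (i : Q.V) (p q : S.fiber i), S.ordIdx ord q.1 < S.ordIdx ord p.1 → wt q.1 < wt p.1

/-- (AG2): each arrow of `Q` has a fixed weight for the grading. -/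
def AG2 (wt : S.B → ℤ) (wtA : Q.A → ℤ) : Prop :=
  ∀ (a : Q.A) (p : S.fiber (Q.src a)) (p' : S.fiber (Q.tgt a)),
    R.map a (S.bas (Q.src a) p) = S.bas (Q.tgt a) p' → wt p'.1 = wt p.1 + wtA a

/-- The lowest-weight component of a vector `u ∈ M^(i)` with respect to a grading. -/
def lead (wt : S.B → ℤ) (i : Q.V) (u : R.M i) : R.M i :=
  if h : (((S.bas i).repr u).support).Nonempty then
    ∑ p ∈ ((S.bas i).repr u).support.filter
        (fun p => wt p.1 =
          ((((S.bas i).repr u).support.image fun q => wt q.1).min' (h.image _))),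
      ((S.bas i).repr u) p • S.bas i p
  else 0

/-- The Bialynicki-Birula limit `lim_{z→0} z.U` of a tuple of subspaces under the
`ℂ*`-action induced by the grading `wt`: the span of the lowest-weight components of
the nonzero vectors. -/
def bblim (wt : S.B → ℤ) (U : ∀ i, Submodule ℂ (R.M i)) : ∀ i, Submodule ℂ (R.M i) :=
  fun i => Submodule.span ℂ {v | ∃ u ∈ U i, u ≠ 0 ∧ v = S.lead wt i u}

/-- The attracting set of a fixed point `V` for the `ℂ*`-action induced by `wt`. -/
def attrSet (wt : S.B → ℤ) (e : Q.V → ℕ) (V : ∀ i, Submodule ℂ (R.M i)) :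
    Set (∀ i, Submodule ℂ (R.M i)) :=
  {U | U ∈ R.grass e ∧ S.bblim wt U = V}

/-- The pair `(p, q)` is an *initial parameter* `μ^{(i)}_{ℓ,k}` (`k ↔ p ∈ K`,
`ℓ ↔ q ∉ K`) for the coordinate subrepresentation given by `K`. -/
def IsInitial (ord : ∀ i, S.fiber i ≃ Fin (Fintype.card (S.fiber i)))
    (K : Set S.B) (p q : S.B) : Prop :=
  p ∈ K ∧ q ∉ K ∧ S.overVtx p = S.overVtx q ∧ S.ordIdx ord p < S.ordIdx ord q ∧
  (S.predOf p = none ∨ ∃ p₀, S.predOf p = some p₀ ∧ p₀ ∉ K) ∧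
  (∀ q', S.succOf q = some q' → q' ∉ K →
    ∃ p', S.succOf p = some p' ∧ S.overVtx p' = S.overVtx q')

/-- The number of initial parameters of the coordinate subrepresentation given by `K`. -/
def numInitial (ord : ∀ i, S.fiber i ≃ Fin (Fintype.card (S.fiber i)))
    (K : Set S.B) : ℕ :=
  Nat.card {pq : S.B × S.B // S.IsInitial ord K pq.1 pq.2}

end StraightBasis

end

/-!
The element `t ∈ T_M` with `γ_j = 2 ^ (number of basis vectors in earlier segments)` and
`ν = 2` acts on `b_{j,k}` by `2 ^ index`, where `index` enumerates `B` segment by segment;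
so `t` is diagonal in `B` with pairwise distinct eigenvalues. For such a diagonal map the
projection onto a coordinate line is a polynomial in it (a Lagrange interpolation
polynomial), hence every `t`-stable subspace is spanned by the basis vectors it contains.
Thus each `T_M`-fixed point is a coordinate subrepresentation, and there are at most
`2 ^ |B|` of them. The enumeration itself is the required grading, with all arrow weights `1`.
-/

open Polynomial

namespace Module.Basis

variable {K V ι : Type*} [Field K] [AddCommGroup V] [Module K V]
  (b : Basis ι K V) (c : ι → K)

theorem aeval_constr_smul_apply_self (P : K[X]) (q : ι) :
    aeval (b.constr K fun q => c q • b q) P (b q) = P.eval (c q) • b q :=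
  Module.End.aeval_apply_of_hasEigenvector
    ⟨Module.End.mem_eigenspace_iff.mpr (b.constr_basis K _ q), b.ne_zero q⟩

theorem aeval_lagrangeBasis_constr_smul [Fintype ι] (hc : Function.Injective c) (p : ι) :
    aeval (b.constr K fun q => c q • b q) (Lagrange.basis Finset.univ c p) =
      (b.coord p).smulRight (b p) := by
  refine b.ext fun q => ?_
  rw [aeval_constr_smul_apply_self, LinearMap.smulRight_apply, coord_apply, repr_self,
    Finsupp.single_apply]
  by_cases hpq : p = q
  · subst hpq
    rw [Lagrange.eval_basis_self hc.injOn (Finset.mem_univ p), if_pos rfl, one_smul]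
  · rw [Lagrange.eval_basis_of_ne hpq (Finset.mem_univ q), if_neg (Ne.symm hpq), zero_smul,
      zero_smul]

theorem eq_span_image_of_le_comap_constr_smul [Fintype ι] (hc : Function.Injective c)
    {U : Submodule K V} (hU : U ≤ U.comap (b.constr K fun q => c q • b q)) :
    U = Submodule.span K (b '' {q | b q ∈ U}) := by
  refine le_antisymm (fun u hu => ?_)
    (Submodule.span_le.mpr (Set.image_subset_iff.mpr fun _ => id))
  rw [← b.sum_repr u]
  refine Submodule.sum_mem _ fun q _ => ?_
  have hq : b.repr u q • b q ∈ U := by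
    simpa [aeval_lagrangeBasis_constr_smul b c hc] using
      Polynomial.aeval_apply_smul_mem_of_le_comap hu (Lagrange.basis Finset.univ c q) _ hU
  by_cases h : b.repr u q = 0
  · simp [h]
  · exact Submodule.smul_mem _ _ (Submodule.subset_span ⟨q, (U.smul_mem_iff h).mp hq, rfl⟩)

end Module.Basis

namespace StraightBasis

variable {Q : FinQuiver} {R : QuivRep Q} (S : StraightBasis R)

theorem map_arrOf_ne_zero (j : Fin S.d) (k : Fin (S.len j)) (hk : (k : ℕ) + 1 < S.len j) :
    R.map (S.arrOf j k) ≠ 0 := by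
  intro h0
  have h := S.map_bas (S.arrOf j k) ⟨⟨j, k⟩, (S.arr_src j k hk).symm⟩
  rw [dif_pos ⟨hk, rfl⟩, h0, LinearMap.zero_apply] at h
  exact Module.Basis.ne_zero _ _ h.symm

theorem succOf_eq_some {p q : S.B} (h : S.succOf p = some q) :
    ∃ hk : (p.2 : ℕ) + 1 < S.len p.1, q = ⟨p.1, ⟨p.2 + 1, hk⟩⟩ := by
  unfold succOf at h
  split_ifs at h with hk
  exact ⟨hk, (Option.some_injective _ h).symm⟩

/-- Every arrow along a segment lies in the support of `M`, so `nuExt` never falls back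
to `1` here. -/
theorem twt_cochar_one (mγ : Fin S.d → ℤ) (z : ℂˣ) (p : S.B) :
    S.twt (S.cochar mγ (fun _ => 1) z) p = z ^ (mγ p.1 + p.2) := by
  have hν : ∀ m ∈ (Finset.range (p.2 : ℕ)).attach, R.nuExt (fun _ => z ^ (1 : ℤ))
      (S.arrOf p.1 ⟨m.1, lt_trans (Finset.mem_range.mp m.2) p.2.isLt⟩) = z := by
    rintro ⟨m, hm⟩ -
    rw [QuivRep.nuExt, dif_pos (S.map_arrOf_ne_zero _ _ (by simp at hm ⊢; omega)), zpow_one]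
  rw [twt, cochar, Finset.prod_congr rfl hν, Finset.prod_const, Finset.card_attach,
    Finset.card_range, zpow_add, zpow_natCast]

def segStart (j : Fin S.d) : ℕ := ∑ i : Fin j, S.len (Fin.castLE j.2.le i)

def index (p : S.B) : ℕ := finSigmaFinEquiv p

theorem index_eq (p : S.B) : S.index p = S.segStart p.1 + p.2 :=
  finSigmaFinEquiv_apply p

theorem index_injective : Function.Injective S.index :=
  Fin.val_injective.comp finSigmaFinEquiv.injective

theorem index_of_succOf_eq_some {p q : S.B} (h : S.succOf p = some q) :
    S.index q = S.index p + 1 := by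
  obtain ⟨hk, rfl⟩ := S.succOf_eq_some h
  simp only [index_eq]
  omega

noncomputable def separatingElt : S.Torus :=
  S.cochar (fun j => S.segStart j) (fun _ => 1) (Units.mk0 2 two_ne_zero)

theorem twt_separatingElt (p : S.B) : (S.twt S.separatingElt p : ℂ) = 2 ^ S.index p := by
  rw [separatingElt, twt_cochar_one, index_eq, Units.val_zpow_eq_zpow_val, Units.val_mk0]
  exact_mod_cast zpow_natCast (2 : ℂ) _

theorem twt_separatingElt_injective :
    Function.Injective fun p => (S.twt S.separatingElt p : ℂ) := by
  intro p q h
  simp only [twt_separatingElt] at h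
  exact S.index_injective (Nat.pow_right_injective le_rfl (by exact_mod_cast h))

theorem fiber_mem_coordSet_iff (U : ∀ i, Submodule ℂ (R.M i)) {i : Q.V} (p : S.fiber i) :
    p.1 ∈ S.coordSet U ↔ S.bas i p ∈ U i := by
  obtain ⟨p, rfl⟩ := p
  rfl

theorem eq_coordSub_coordSet_of_mem_fixedPts {e : Q.V → ℕ} {U : ∀ i, Submodule ℂ (R.M i)}
    (hU : U ∈ S.fixedPts e) : U = S.coordSub (S.coordSet U) := by
  funext i
  have hstable : U i ≤ (U i).comap (S.tmap S.separatingElt i) :=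
    Submodule.map_le_iff_le_comap.mp (congrFun (hU.2 S.separatingElt) i).le
  rw [(S.bas i).eq_span_image_of_le_comap_constr_smul _
    (fun p q h => Subtype.ext (S.twt_separatingElt_injective h)) hstable, coordSub]
  congr 2
  ext q
  exact (S.fiber_mem_coordSet_iff U q).symm

end StraightBasis

/-- Let `M` be a straight representation of a finite quiver `Q` with
straightening basis `B` and `e` a dimension vector.  Then the torus `T_M = (ℂ*)^{d+c}`
acts on `Gr_e(M)` with finitely many fixed points, every fixed point is a coordinate
subrepresentation, and there is a constructible grading of `B` (a cocharacter of `T_M`)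
with pairwise distinct weights. -/
theorem straight_finitely_many_fixed_points {Q : FinQuiver} {R : QuivRep Q}
    (S : StraightBasis R) (e : Q.V → ℕ) :
    (S.fixedPts e).Finite ∧
    (∀ U ∈ S.fixedPts e, ∃ K : Set S.B, U = S.coordSub K) ∧
    (∃ (wt : S.B → ℤ) (wtA : Q.A → ℤ), Function.Injective wt ∧
      ∀ p q : S.B, S.succOf p = some q → wt q = wt p + wtA (S.arrOf p.1 p.2)) := by
  have hcoord : ∀ U ∈ S.fixedPts e, U = S.coordSub (S.coordSet U) :=
    fun _ => S.eq_coordSub_coordSet_of_mem_fixedPts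
  refine ⟨(Set.finite_range S.coordSub).subset fun U hU => ⟨_, (hcoord U hU).symm⟩,
    fun U hU => ⟨_, hcoord U hU⟩, fun p => S.index p, fun _ => 1,
    Nat.cast_injective.comp S.index_injective, fun p q h => ?_⟩
  simp [S.index_of_succOf_eq_some h]
end

section
/- Let Q be the quiver 1 → 2 ← 3, let M be the representation with M^(i) = ℂ³ for i = 1,2,3 and both structure maps equal to the identity, and let e = (1,2,1). Let B = {b_{i,k} : i ∈ [3], k ∈ [3]} be the standard basis and let the torus T = (ℂ*)^5 act by t.b_{1,k} = t_k t_4 · b_{1,k}, t.b_{2,k} = t_k · b_{2,k}, t.b_{3,k} = t_k t_5 · b_{3,k}. Then Gr_e(M) contains infinitely many one-dimensional T-orbits; in particular the T-action is not skeletal. Concretely, the points q_{a,c} = (⟨b_{1,2} + a·b_{1,3}⟩, ⟨b_{2,2}, b_{2,3}⟩, ⟨b_{3,2} + c·b_{3,3}⟩) for (a,c) ∈ ℂ² lie in Gr_e(M), and t.q_{a,c} = q_{(t₃/t₂)a, (t₃/t₂)c}, so the T-orbit of q_{a,c} is one-dimensional whenever (a,c) ≠ (0,0), and q_{a,c} and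 q_{a',c'} lie in distinct orbits whenever (a:c) ≠ (a':c') in ℙ¹. -/
open scoped Classical

noncomputable section

namespace QGExample

/-- The vector space `ℂ³` at each of the three vertices. -/
abbrev V3 := Fin 3 → ℂ

/-- The standard basis vectors `b_{i,k}` (we only record the `k`-index; `k : Fin 3`
is `0`-based, so `b_{i,2} = e 1` and `b_{i,3} = e 2`). -/
def e (k : Fin 3) : V3 := Pi.single k 1

/-- The diagonal linear map scaling the `k`-th coordinate by `c k`. -/
def diagMap (c : Fin 3 → ℂˣ) : V3 →ₗ[ℂ] V3 :=
  LinearMap.pi fun k => ((c k : ℂ)) • LinearMap.proj k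

/-- The action of `t ∈ T = (ℂ*)^5` on tuples of subspaces:
`t.b_{1,k} = t_k t_4 b_{1,k}`, `t.b_{2,k} = t_k b_{2,k}`, `t.b_{3,k} = t_k t_5 b_{3,k}`. -/
def act (t : Fin 5 → ℂˣ) (U : Submodule ℂ V3 × Submodule ℂ V3 × Submodule ℂ V3) :
    Submodule ℂ V3 × Submodule ℂ V3 × Submodule ℂ V3 :=
  (U.1.map (diagMap fun k => t ⟨k, by omega⟩ * t 3),
   U.2.1.map (diagMap fun k => t ⟨k, by omega⟩),
   U.2.2.map (diagMap fun k => t ⟨k, by omega⟩ * t 4))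

/-- The `T`-orbit of a point. -/
def orbit (x : Submodule ℂ V3 × Submodule ℂ V3 × Submodule ℂ V3) :
    Set (Submodule ℂ V3 × Submodule ℂ V3 × Submodule ℂ V3) :=
  {y | ∃ t : Fin 5 → ℂˣ, y = act t x}

/-- One-dimensional `T`-orbits of points of a set `X`: infinite orbits which coincide
with the orbit of any of their points under a single cocharacter `ℂ* → T`. -/
def IsOneDimOrbitIn (X : Set (Submodule ℂ V3 × Submodule ℂ V3 × Submodule ℂ V3))
    (O : Set (Submodule ℂ V3 × Submodule ℂ V3 × Submodule ℂ V3)) : Prop :=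
  (∃ x ∈ X, O = orbit x) ∧ O.Infinite ∧
  ∀ x ∈ O, ∃ m : Fin 5 → ℤ, O = {y | ∃ z : ℂˣ, y = act (fun j => z ^ m j) x}

/-- The points `q_{a,c} = (⟨b_{1,2} + a b_{1,3}⟩, ⟨b_{2,2}, b_{2,3}⟩, ⟨b_{3,2} + c b_{3,3}⟩)`. -/
def q (a c : ℂ) : Submodule ℂ V3 × Submodule ℂ V3 × Submodule ℂ V3 :=
  (ℂ ∙ (e 1 + a • e 2), Submodule.span ℂ {e 1, e 2}, ℂ ∙ (e 1 + c • e 2))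

end QGExample

end

noncomputable section
namespace QGExample

/-- The quiver Grassmannian `Gr_{(1,2,1)}(M)` for the quiver `1 → 2 ← 3` and
`M = ℂ³ → ℂ³ ← ℂ³` with identity structure maps: triples `(U₁, U₂, U₃)` with
`U₁ ⊆ U₂ ⊇ U₃` of dimensions `(1,2,1)`. -/
def grSink : Set (Submodule ℂ V3 × Submodule ℂ V3 × Submodule ℂ V3) :=
  {U | U.1 ≤ U.2.1 ∧ U.2.2 ≤ U.2.1 ∧
    Module.finrank ℂ U.1 = 1 ∧ Module.finrank ℂ U.2.1 = 2 ∧ Module.finrank ℂ U.2.2 = 1}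

/-! Every diagonal map fixes the plane `⟨b₂, b₃⟩` and sends the line `⟨b₂ + a b₃⟩` to
`⟨b₂ + (c₃/c₂) a b₃⟩`, so `T` acts on the family `q_{a,c}` only through the character `t₃/t₂`,
by scaling `(a, c)`. Hence the orbit of `q_{a,c}` is the punctured line `ℂˣ (a, c)`: it is
infinite when `(a, c) ≠ 0`, it is traced out by the single cocharacter `z ↦ (1, 1, z, 1, 1)`,
and it determines the point `(a : c)` of `ℙ¹`. -/

theorem diagMap_apply (c : Fin 3 → ℂˣ) (v : V3) (k : Fin 3) :
    diagMap c v k = (c k : ℂ) * v k := rfl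

theorem e_apply (j k : Fin 3) : e j k = if k = j then 1 else 0 := by
  simp [e, Pi.single_apply]

theorem diagMap_e (c : Fin 3 → ℂˣ) (j : Fin 3) : diagMap c (e j) = (c j : ℂ) • e j := by
  funext k
  by_cases h : k = j <;> simp [diagMap_apply, e_apply, h]

theorem map_diagMap_line (c : Fin 3 → ℂˣ) (a : ℂ) :
    (ℂ ∙ (e 1 + a • e 2)).map (diagMap c) = ℂ ∙ (e 1 + (((c 2 * (c 1)⁻¹ : ℂˣ) : ℂ) * a) • e 2) := by
  have hscale : diagMap c (e 1 + a • e 2) =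
      (c 1 : ℂ) • (e 1 + (((c 2 * (c 1)⁻¹ : ℂˣ) : ℂ) * a) • e 2) := by
    funext k
    fin_cases k <;> simp [diagMap_apply, e_apply]
    field_simp
  rw [Submodule.map_span, Set.image_singleton, hscale,
    Submodule.span_singleton_smul_eq (c 1).isUnit]

theorem map_diagMap_plane (c : Fin 3 → ℂˣ) :
    (Submodule.span ℂ {e 1, e 2}).map (diagMap c) = Submodule.span ℂ {e 1, e 2} := by
  rw [Submodule.map_span, Set.image_pair, diagMap_e, diagMap_e, Submodule.span_insert,
    Submodule.span_insert, Submodule.span_singleton_smul_eq (c 1).isUnit,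
    Submodule.span_singleton_smul_eq (c 2).isUnit]

theorem act_q (t : Fin 5 → ℂˣ) (a c : ℂ) :
    act t (q a c) =
      q (((t 2 * (t 1)⁻¹ : ℂˣ) : ℂ) * a) (((t 2 * (t 1)⁻¹ : ℂˣ) : ℂ) * c) := by
  simp only [act, q, map_diagMap_line, map_diagMap_plane, ← div_eq_mul_inv,
    mul_div_mul_right_eq_div]
  rfl

theorem line_injective : Function.Injective fun a : ℂ => ℂ ∙ (e 1 + a • e 2) := by
  intro a a' (h : ℂ ∙ (e 1 + a • e 2) = ℂ ∙ (e 1 + a' • e 2))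
  obtain ⟨r, hr⟩ := Submodule.mem_span_singleton.mp (h ▸ Submodule.mem_span_singleton_self _)
  have h1 := congrFun hr 1
  have h2 := congrFun hr 2
  simp only [Pi.smul_apply, Pi.add_apply, e_apply, ↓reduceIte, Fin.reduceEq, smul_eq_mul,
    mul_zero, add_zero, mul_one, zero_add] at h1 h2
  rwa [h1, one_mul, eq_comm] at h2

theorem q_inj {a c a' c' : ℂ} : q a c = q a' c' ↔ a = a' ∧ c = c' := by
  refine ⟨fun h => ?_, fun h => h.1 ▸ h.2 ▸ rfl⟩
  simp only [q, Prod.mk.injEq] at h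
  exact ⟨line_injective h.1, line_injective h.2.2⟩

theorem e_one_add_smul_ne_zero (a : ℂ) : e 1 + a • e 2 ≠ 0 := by
  intro h
  simpa [e_apply] using congrFun h 1

theorem e_one_add_smul_mem_plane (a : ℂ) : e 1 + a • e 2 ∈ Submodule.span ℂ {e 1, e 2} :=
  add_mem (Submodule.subset_span (by simp))
    (Submodule.smul_mem _ _ (Submodule.subset_span (by simp)))

theorem finrank_plane : Module.finrank ℂ (Submodule.span ℂ {e 1, e 2}) = 2 := by
  have hli : LinearIndependent ℂ ![e 1, e 2] := by
    refine LinearIndependent.pair_iff.mpr fun s t hst => ?_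
    have h1 := congrFun hst 1
    have h2 := congrFun hst 2
    simpa [e_apply] using And.intro h1 h2
  rw [← Matrix.range_cons_cons_empty (e 1) (e 2) ![], finrank_span_eq_card hli, Fintype.card_fin]

theorem q_mem_grSink (a c : ℂ) : q a c ∈ grSink := by
  simp only [grSink, q, Set.mem_ofPred_eq, Submodule.span_singleton_le_iff_mem]
  exact ⟨e_one_add_smul_mem_plane a, e_one_add_smul_mem_plane c,
    finrank_span_singleton (e_one_add_smul_ne_zero a), finrank_plane,
    finrank_span_singleton (e_one_add_smul_ne_zero c)⟩

theorem orbit_q (a c : ℂ) : orbit (q a c) = Set.range fun s : ℂˣ => q (s * a) (s * c) := by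
  ext y
  constructor
  · rintro ⟨t, rfl⟩
    exact ⟨t 2 * (t 1)⁻¹, (act_q t a c).symm⟩
  · rintro ⟨s, rfl⟩
    exact ⟨Pi.mulSingle 2 s, by simp [act_q]⟩

theorem orbit_q_units_mul (s : ℂˣ) (a c : ℂ) : orbit (q (s * a) (s * c)) = orbit (q a c) := by
  rw [orbit_q, orbit_q,
    ← (Equiv.mulRight s).surjective.range_comp fun u : ℂˣ => q (u * a) (u * c)]
  simp [Function.comp_def, mul_assoc]

theorem act_zpow_single_q (z : ℂˣ) (a c : ℂ) :
    act (fun j => z ^ (Pi.single 2 1 : Fin 5 → ℤ) j) (q a c) = q (z * a) (z * c) := by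
  simp [act_q, Pi.single_apply]

theorem orbit_q_infinite {a c : ℂ} (h : ¬(a = 0 ∧ c = 0)) : (orbit (q a c)).Infinite := by
  have hinj : Set.InjOn (fun s : ℂ => q (s * a) (s * c)) {0}ᶜ := fun s _ s' _ hss' => by
    obtain ⟨ha, hc⟩ := q_inj.mp hss'
    rcases not_and_or.mp h with ha0 | hc0
    exacts [mul_right_cancel₀ ha0 ha, mul_right_cancel₀ hc0 hc]
  refine Set.infinite_of_injOn_mapsTo hinj (fun s hs => ?_) (Set.finite_singleton 0).infinite_compl
  rw [orbit_q]
  exact ⟨Units.mk0 s hs, rfl⟩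

theorem isOneDimOrbitIn_orbit_q {a c : ℂ} (h : ¬(a = 0 ∧ c = 0)) :
    IsOneDimOrbitIn grSink (orbit (q a c)) := by
  refine ⟨⟨q a c, q_mem_grSink a c, rfl⟩, orbit_q_infinite h, fun x hx => ⟨Pi.single 2 1, ?_⟩⟩
  rw [orbit_q] at hx
  obtain ⟨s, rfl⟩ := hx
  simp only [act_zpow_single_q]
  rw [← orbit_q_units_mul s, orbit_q]
  exact Set.ext fun _ => exists_congr fun _ => eq_comm

theorem orbit_q_ne {a c a' c' : ℂ} (h : a * c' ≠ a' * c) : orbit (q a c) ≠ orbit (q a' c') := by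
  intro horb
  have hmem : q a' c' ∈ orbit (q a c) := by
    rw [horb, orbit_q]
    exact ⟨1, by simp⟩
  rw [orbit_q] at hmem
  obtain ⟨s, hs⟩ := hmem
  obtain ⟨rfl, rfl⟩ := q_inj.mp hs
  exact h (by ring)

/-- For `Q = 1 → 2 ← 3`, `M = ℂ³ → ℂ³ ← ℂ³` with identity maps,
`e = (1,2,1)` and the rank-`5` torus action above, the points `q_{a,c}` lie in
`Gr_e(M)`, satisfy `t.q_{a,c} = q_{(t₃/t₂)a,(t₃/t₂)c}`, have one-dimensional orbit for
`(a,c) ≠ (0,0)`, lie in distinct orbits for distinct `(a:c) ∈ ℙ¹`, and hence `Gr_e(M)`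
contains infinitely many one-dimensional `T`-orbits; in particular the action is not
skeletal. -/
theorem two_sink_not_skeletal :
    (∀ a c : ℂ, q a c ∈ grSink) ∧
    (∀ (t : Fin 5 → ℂˣ) (a c : ℂ),
      act t (q a c) =
        q (((t 2 * (t 1)⁻¹ : ℂˣ) : ℂ) * a) (((t 2 * (t 1)⁻¹ : ℂˣ) : ℂ) * c)) ∧
    (∀ a c : ℂ, ¬(a = 0 ∧ c = 0) → IsOneDimOrbitIn grSink (orbit (q a c))) ∧
    (∀ a c a' c' : ℂ, ¬(a = 0 ∧ c = 0) → ¬(a' = 0 ∧ c' = 0) → a * c' ≠ a' * c →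
      orbit (q a c) ≠ orbit (q a' c')) ∧
    {O : Set (Submodule ℂ V3 × Submodule ℂ V3 × Submodule ℂ V3) |
      IsOneDimOrbitIn grSink O}.Infinite := by
  refine ⟨q_mem_grSink, act_q, fun _ _ => isOneDimOrbitIn_orbit_q,
    fun _ _ _ _ _ _ => orbit_q_ne, ?_⟩
  have hinj : Function.Injective fun a : ℂ => orbit (q a 1) := fun a a' horb => by
    by_contra hne
    exact orbit_q_ne (by simpa using hne) horb
  exact Set.infinite_of_injective_forall_mem hinj fun _ => isOneDimOrbitIn_orbit_q (by simp)

end QGExample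
end
end
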